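/- Let M ∈ ℝ^{n×n} and let M₁ ∈ ℝ^{s×n} consist of a subset S of s rows of M, with M₁₁ ∈ ℝ^{s×s} the submatrix of M on rows and columns S. If M is symmetric positive semidefinite and rank(M₁₁) = rank(M), then M = M₁ᵀ M₁₁⁺ M₁, where M₁₁⁺ denotes the Moore–Penrose pseudoinverse. -/

import Mathlib

/-!
Write `M = Bᵀ B`. With `A` the columns of `B` indexed by `S`, `M₁₁ = Aᵀ A` and `M₁ = Aᵀ B`, and
`rank A = rank M₁₁ = rank M = rank B`. Since the columns of `A` are among those of `B`, they span the
same space, so `B = A C`. Then `M = Cᵀ M₁₁ C = Cᵀ M₁₁ P M₁₁ C = M₁ᵀ P M₁` because `M₁ = M₁₁ C`.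
-/

namespace Matrix

variable {R l m n o : Type*}

theorem exists_mul_eq_of_range_mulVecLin_le [CommSemiring R] [Fintype m] [Fintype n]
    {A : Matrix l m R} {B : Matrix l n R}
    (h : LinearMap.range B.mulVecLin ≤ LinearMap.range A.mulVecLin) :
    ∃ C : Matrix m n R, A * C = B := by
  have hcol (k : n) : ∃ c, A *ᵥ c = B.col k :=
    h <| by rw [range_mulVecLin]; exact Submodule.subset_span ⟨k, rfl⟩
  choose c hc using hcol
  exact ⟨(of c)ᵀ, ext fun i k => congrFun (hc k) i⟩

theorem range_mulVecLin_submatrix_id_le [CommSemiring R] [Fintype n] [Fintype o]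
    (B : Matrix l n R) (e : o → n) :
    LinearMap.range (B.submatrix id e).mulVecLin ≤ LinearMap.range B.mulVecLin := by
  simp only [range_mulVecLin]
  exact Submodule.span_mono <| Set.range_subset_iff.2 fun j => ⟨e j, rfl⟩

theorem exists_submatrix_mul_eq_of_rank_eq [Field R] [Finite l] [Fintype n] [Fintype o]
    {B : Matrix l n R} (e : o → n) (h : (B.submatrix id e).rank = B.rank) :
    ∃ C : Matrix o n R, B.submatrix id e * C = B :=
  exists_mul_eq_of_range_mulVecLin_le
    (Submodule.eq_of_le_of_finrank_le (range_mulVecLin_submatrix_id_le B e) h.symm.le).ge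

theorem submatrix_transpose_mul_self [CommSemiring R] [Fintype l] (B : Matrix l n R)
    (e : o → n) (f : m → n) :
    (Bᵀ * B).submatrix e f = (B.submatrix id e)ᵀ * B.submatrix id f := by
  ext i j
  simp [mul_apply]

theorem transpose_mul_self_eq_of_rank_submatrix_eq [Field R] [LinearOrder R]
    [IsStrictOrderedRing R] [Fintype l] [Fintype n] [Fintype o]
    (B : Matrix l n R) (e : o → n) (h : ((Bᵀ * B).submatrix e e).rank = (Bᵀ * B).rank)
    {P : Matrix o o R}
    (hP : (Bᵀ * B).submatrix e e * P * (Bᵀ * B).submatrix e e = (Bᵀ * B).submatrix e e) :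
    Bᵀ * B = ((Bᵀ * B).submatrix e id)ᵀ * P * (Bᵀ * B).submatrix e id := by
  rw [submatrix_transpose_mul_self] at h hP ⊢
  rw [submatrix_id_id]
  rw [rank_transpose_mul_self, rank_transpose_mul_self] at h
  obtain ⟨C, hC⟩ := exists_submatrix_mul_eq_of_rank_eq e h
  generalize B.submatrix id e = A at hP hC
  subst hC
  calc (A * C)ᵀ * (A * C) = Cᵀ * (Aᵀ * A) * C := by
        rw [transpose_mul]; simp only [Matrix.mul_assoc]
    _ = Cᵀ * (Aᵀ * A * P * (Aᵀ * A)) * C := by rw [hP]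
    _ = (Aᵀ * (A * C))ᵀ * P * (Aᵀ * (A * C)) := by
        rw [transpose_mul, transpose_mul, transpose_transpose]; simp only [Matrix.mul_assoc]

end Matrix

open Matrix

theorem nystrom_reconstruction_general {n s : ℕ}
    (M : Matrix (Fin n) (Fin n) ℝ) (e : Fin s → Fin n)
    (hM : M.PosSemidef)
    (M₁ : Matrix (Fin s) (Fin n) ℝ) (hM₁ : M₁ = M.submatrix e id)
    (M₁₁ : Matrix (Fin s) (Fin s) ℝ) (hM₁₁ : M₁₁ = M.submatrix e e)
    (hrank : M₁₁.rank = M.rank)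
    (P : Matrix (Fin s) (Fin s) ℝ)
    (hP1 : M₁₁ * P * M₁₁ = M₁₁) :
    M = M₁ᵀ * P * M₁ := by
  obtain ⟨B, rfl⟩ : ∃ B : Matrix (Fin n) (Fin n) ℝ, M = Bᵀ * B := by
    open scoped MatrixOrder in exact CStarAlgebra.nonneg_iff_eq_star_mul_self.mp hM.nonneg
  subst hM₁ hM₁₁
  exact transpose_mul_self_eq_of_rank_submatrix_eq B e hrank hP1

/-- Exact Nyström reconstruction: if `M` is symmetric PSD, `M₁ = M[S,:]` is a row
restriction of `M`, `M₁₁ = M[S,S]`, `rank M₁₁ = rank M`, and `P` is the Moore–Penrose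
pseudoinverse of `M₁₁` (characterized by the four Penrose conditions), then
`M = M₁ᵀ P M₁`. -/
theorem nystrom_reconstruction {n s : ℕ}
    (M : Matrix (Fin n) (Fin n) ℝ) (e : Fin s → Fin n) (he : Function.Injective e)
    (hM : M.PosSemidef)
    (M₁ : Matrix (Fin s) (Fin n) ℝ) (hM₁ : M₁ = M.submatrix e id)
    (M₁₁ : Matrix (Fin s) (Fin s) ℝ) (hM₁₁ : M₁₁ = M.submatrix e e)
    (hrank : M₁₁.rank = M.rank)
    (P : Matrix (Fin s) (Fin s) ℝ)
    (hP1 : M₁₁ * P * M₁₁ = M₁₁) (hP2 : P * M₁₁ * P = P)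
    (hP3 : (M₁₁ * P)ᵀ = M₁₁ * P) (hP4 : (P * M₁₁)ᵀ = P * M₁₁) :
    M = M₁ᵀ * P * M₁ :=
  nystrom_reconstruction_general M e hM M₁ hM₁ M₁₁ hM₁₁ hrank P hP1
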